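/- The kernel of the 7×7 matrix M is exactly the line spanned by e₁: for x ∈ ℝ⁷, M·x = 0 if and only if x is a scalar multiple of e₁ = (0,1,0,0,0,0,0)ᵀ. -/
import Mathlib

open Matrix Real MeasureTheory

noncomputable def e (i : Fin 7) : Fin 7 → ℝ := Pi.single i 1

noncomputable def M : Matrix (Fin 7) (Fin 7) ℝ :=
  !![21/8, 0, Real.sqrt 15 / 8, 0, 0, 0, 0;
     0, 0, 0, 0, 0, 0, 0;
     Real.sqrt 15 / 8, 0, 19/8, 0, 0, 0, 0;
     0, 0, 0, 3, 0, 0, 0;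
     0, 0, 0, 0, 19/8, 0, -(Real.sqrt 15 / 8);
     0, 0, 0, 0, 0, 2, 0;
     0, 0, 0, 0, -(Real.sqrt 15 / 8), 0, 21/8]

@[simp]
lemma cons_val_five' {α : Type*} {m : ℕ} (x : α)
    (u : Fin m.succ.succ.succ.succ.succ → α) :
    Matrix.vecCons x u 5 = Matrix.vecHead (Matrix.vecTail (Matrix.vecTail
      (Matrix.vecTail (Matrix.vecTail u)))) := rfl

@[simp]
lemma cons_val_six' {α : Type*} {m : ℕ} (x : α)
    (u : Fin m.succ.succ.succ.succ.succ.succ → α) :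
    Matrix.vecCons x u 6 = Matrix.vecHead (Matrix.vecTail (Matrix.vecTail
      (Matrix.vecTail (Matrix.vecTail (Matrix.vecTail u))))) := rfl

theorem M_kernel (x : Fin 7 → ℝ) :
    M *ᵥ x = 0 ↔ ∃ c : ℝ, x = c • e 1 := by
  have hs : Real.sqrt 15 ^ 2 = 15 := Real.sq_sqrt (by norm_num)
  have he : ∀ c : ℝ, c • e 1 = ![0, c, 0, 0, 0, 0, 0] := by
    intro c
    funext i
    fin_cases i <;> simp [e, Pi.single_apply]
  constructor
  · intro h
    have h0 := congrFun h 0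
    have h2 := congrFun h 2
    have h3 := congrFun h 3
    have h4 := congrFun h 4
    have h5 := congrFun h 5
    have h6 := congrFun h 6
    simp [M, Matrix.mulVec, dotProduct, Fin.sum_univ_seven] at h0 h2 h3 h4 h5 h6
    have hx0 : x 0 = 0 := by
      linear_combination (19/48) * h0 - (Real.sqrt 15/48) * h2 + (x 0/384) * hs
    have hx2 : x 2 = 0 := by
      linear_combination -(Real.sqrt 15/48) * h0 + (21/48) * h2 + (x 2/384) * hs
    have hx4 : x 4 = 0 := by
      linear_combination (21/48) * h4 + (Real.sqrt 15/48) * h6 + (x 4/384) * hs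
    have hx6 : x 6 = 0 := by
      linear_combination (Real.sqrt 15/48) * h4 + (19/48) * h6 + (x 6/384) * hs
    refine ⟨x 1, ?_⟩
    rw [he]
    funext i
    fin_cases i <;> simp_all
  · rintro ⟨c, rfl⟩
    rw [he]
    funext i
    fin_cases i <;>
      simp [M, Matrix.mulVec, dotProduct, Fin.sum_univ_seven]
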